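/- Let ≺ be the relation on nonempty compact subsets of [-1,1] defined by K'' ≺ K iff K is nonempty compact and there exists a nonempty compact K' ⊆ K with |K'| ≤ 1/2 (i.e., all elements of K' have absolute value ≤ 1/2) and K'' = 2K'. Then K is in the accessible (well-founded) part of ≺ if and only if K is a nonempty compact subset of [-1,1] with 0 ∉ K. -/

import Mathlib

/-- The type of nonempty compact subsets of `[-1,1]`. -/
def CompactI : Type :=
  {K : Set ℝ // IsCompact K ∧ K.Nonempty ∧ K ⊆ Set.Icc (-1) 1}

/-- The relation `K'' ≺ K`: there is a nonempty compact `K' ⊆ K` with `|K'| ≤ 1/2`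
(all elements of `K'` have absolute value `≤ 1/2`) and `K'' = 2K'`. -/
def compactPrec (K'' K : CompactI) : Prop :=
  ∃ K' : CompactI, K'.1 ⊆ K.1 ∧ (∀ x ∈ K'.1, |x| ≤ 1/2) ∧
    K''.1 = (fun x : ℝ => 2 * x) '' K'.1

/-!
If `0 ∈ K`, then `{0} ≺ K` and `{0} ≺ {0}`, so `K` is not accessible. If `0 ∉ K`, closedness of `K`
gives `(1/2)^n < |x|` on `K` for some `n`; every step `K'' ≺ K` doubles this lower bound, while
no element of `[-1,1]` has absolute value above `1`, so every descending chain from `K` has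
length at most `n`.
-/

theorem Acc.irrefl {α : Sort*} {r : α → α → Prop} {a : α} (h : Acc r a) : ¬ r a a := by
  induction h with
  | intro b _ ih => exact fun hbb => ih b hbb hbb

theorem IsClosed.exists_pos_forall_le_norm {E : Type*} [SeminormedAddCommGroup E] {s : Set E}
    (hs : IsClosed s) (h0 : 0 ∉ s) : ∃ ε > 0, ∀ x ∈ s, ε ≤ ‖x‖ := by
  obtain ⟨ε, hε, hball⟩ := Metric.isOpen_iff.1 hs.isOpen_compl 0 h0
  refine ⟨ε, hε, fun x hx => not_lt.1 fun hlt => hball ?_ hx⟩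
  rwa [Metric.mem_ball, dist_zero_right]

namespace CompactI

def zero : CompactI :=
  ⟨{0}, isCompact_singleton, Set.singleton_nonempty 0, by norm_num⟩

theorem compactPrec_zero {W : CompactI} (hW : (0 : ℝ) ∈ W.1) : compactPrec zero W :=
  ⟨zero, Set.singleton_subset_iff.2 hW, by simp [zero], by simp [zero]⟩

theorem not_acc_of_zero_mem {K : CompactI} (h0 : (0 : ℝ) ∈ K.1) : ¬ Acc compactPrec K :=
  fun hK => (hK.inv (compactPrec_zero h0)).irrefl (compactPrec_zero rfl)

theorem lt_abs_of_compactPrec {K'' K : CompactI} (h : compactPrec K'' K) {c : ℝ}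
    (hc : ∀ x ∈ K.1, c < |x|) : ∀ x ∈ K''.1, 2 * c < |x| := by
  obtain ⟨K', hsub, -, hK''⟩ := h
  rintro _ hx
  obtain ⟨y, hy, rfl⟩ := hK'' ▸ hx
  rw [abs_mul, abs_two]
  linarith [hc y (hsub hy)]

theorem acc_of_forall_pow_lt_abs (n : ℕ) :
    ∀ K : CompactI, (∀ x ∈ K.1, (1 / 2 : ℝ) ^ n < |x|) → Acc compactPrec K := by
  induction n with
  | zero =>
    intro K hK
    obtain ⟨x, hx⟩ := K.2.2.1
    have := hK x hx
    linarith [abs_le.2 (K.2.2.2 hx)]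
  | succ n ih =>
    refine fun K hK => .intro K fun K'' h => ih K'' fun x hx => ?_
    calc (1 / 2 : ℝ) ^ n = 2 * (1 / 2) ^ (n + 1) := by ring
      _ < |x| := lt_abs_of_compactPrec h hK x hx

theorem acc_of_zero_not_mem {K : CompactI} (h0 : (0 : ℝ) ∉ K.1) : Acc compactPrec K := by
  obtain ⟨ε, hε, hK⟩ := K.2.1.isClosed.exists_pos_forall_le_norm h0
  obtain ⟨n, hn⟩ := exists_pow_lt_of_lt_one hε (by norm_num : (1 / 2 : ℝ) < 1)
  exact acc_of_forall_pow_lt_abs n K fun x hx => hn.trans_le (hK x hx)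

end CompactI

/-- A nonempty compact subset `K` of `[-1,1]` is in the accessible (well-founded) part of
the relation `≺` if and only if `0 ∉ K`. -/
theorem stmt15 (K : CompactI) : Acc compactPrec K ↔ 0 ∉ K.1 :=
  ⟨fun hK h0 => CompactI.not_acc_of_zero_mem h0 hK, CompactI.acc_of_zero_not_mem⟩
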